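/- arXiv:2002.00170 — 2 statements merged into one kernel-verified Lean document; each statement's English description precedes it below -/
import Mathlib

section
/- Let α ≥ −1/2 and let C_α = 2(α+1) if α ≥ 1/2 and C_α = 2(α+1) + 1/16 if −1/2 ≤ α < 1/2. Then for every n ∈ ℕ and every real x ≥ √(4n + C_α), |ψ_n^α(x)| ≤ √(2/(n! Γ(n+α+1))) · x^{2n+α+1/2} · e^{−x²/2}. -/
/-
Up to the factor `(-1)^n n!`, `L_n^α` is a monic polynomial `p_n`, and the three-term recurrence
of the Laguerre polynomials reads `p_{n+2}(y) = (y - (2n+3+α)) p_{n+1}(y) - (n+1)(n+1+α) p_n(y)`.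
For `y ≥ 4n + 2α + 2`, induction along the recurrence gives `p_{m+1}(y) ≥ (y - 2(m+1))/2 · p_m(y) > 0`
for `m < n`; the subtracted term is then nonnegative, so `p_{m+1}(y) ≤ y p_m(y)` and `p_n(y) ≤ y^n`.
Hence `|L_n^α(y)| ≤ y^n / n!`. Since `C_α ≥ 2(α+1)`, every `x ≥ √(4n + C_α)` puts `y = x²` in this
range, and the bound on `ψ_n^α(x)` is this estimate multiplied by the prefactors of `ψ_n^α`.
-/

open Real

/-- The generalized Laguerre polynomial of order `α` and degree `n`. -/
noncomputable def laguerreL (α : ℝ) (n : ℕ) (x : ℝ) : ℝ :=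
  ∑ k ∈ Finset.range (n + 1), (-1 : ℝ) ^ k *
    (Real.Gamma (n + α + 1) / (Real.Gamma (k + α + 1) * (n - k).factorial * k.factorial)) * x ^ k

/-- The normalized generalized Laguerre polynomial. -/
noncomputable def laguerreLTilde (α : ℝ) (n : ℕ) (x : ℝ) : ℝ :=
  Real.sqrt (n.factorial / Real.Gamma (n + α + 1)) * laguerreL α n x

/-- The generalized Laguerre function of parameter `a`. -/
noncomputable def psiLag (α a : ℝ) (n : ℕ) (x : ℝ) : ℝ :=
  Real.sqrt 2 * a ^ (α + 1) * x ^ (α + 1/2) * Real.exp (-(a * x) ^ 2 / 2) *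
    laguerreLTilde α n (a ^ 2 * x ^ 2)

open Finset

section ThreeTerm

variable {α y : ℝ} {u : ℕ → ℝ}

lemma three_term_ratio_bound (hα : -1 < α) (h₀ : u 0 = 1) (h₁ : u 1 = y - (α + 1))
    (hrec : ∀ n : ℕ, u (n + 2) = (y - (2 * n + 3 + α)) * u (n + 1) - (n + 1) * (n + 1 + α) * u n) :
    ∀ n : ℕ, 4 * (n + 1) + 2 * α + 2 ≤ y →
      0 < u n ∧ (y - 2 * (n + 1)) / 2 * u n ≤ u (n + 1) ∧ u (n + 1) ≤ y ^ (n + 1)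
  | 0, hy => by
    simp only [h₀, h₁, CharP.cast_eq_zero, zero_add] at hy ⊢
    exact ⟨one_pos, by linarith, by linarith⟩
  | n + 1, hy => by
    push_cast at hy ⊢
    have hn := n.cast_nonneg (α := ℝ)
    obtain ⟨hpos, hratio, hle⟩ := three_term_ratio_bound hα h₀ h₁ hrec n (by linarith)
    have hpos' : 0 < u (n + 1) := lt_of_lt_of_le (mul_pos (by linarith) hpos) hratio
    have hweight : 0 ≤ (n + 1) * (n + 1 + α) := by nlinarith
    have hdisc : 4 * ((n + 1) * (n + 1 + α)) ≤ (y - 2 * (n + 1)) * (y - 2 * (n + 1) - 2 * α) := by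
      nlinarith
    refine ⟨hpos', ?_, ?_⟩
    · rw [hrec]
      nlinarith [mul_le_mul_of_nonneg_left hratio hweight, mul_nonneg (sub_nonneg.2 hdisc) hpos'.le]
    · rw [hrec]
      calc (y - (2 * (n : ℝ) + 3 + α)) * u (n + 1) - (n + 1) * (n + 1 + α) * u n
          ≤ y * y ^ (n + 1) := by
            nlinarith [mul_nonneg hweight hpos.le, pow_pos (show 0 < y by linarith) (n + 1)]
        _ = y ^ (n + 1 + 1) := (pow_succ' y (n + 1)).symm

lemma abs_le_pow_of_three_term (hα : -1 < α) (h₀ : u 0 = 1) (h₁ : u 1 = y - (α + 1))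
    (hrec : ∀ n : ℕ, u (n + 2) = (y - (2 * n + 3 + α)) * u (n + 1) - (n + 1) * (n + 1 + α) * u n)
    (n : ℕ) (hy : 4 * n + 2 * α + 2 ≤ y) : |u n| ≤ y ^ n := by
  cases n with
  | zero => simp [h₀]
  | succ n =>
    obtain ⟨hpos, hratio, hle⟩ := three_term_ratio_bound hα h₀ h₁ hrec n (by exact_mod_cast hy)
    have hn := n.cast_nonneg (α := ℝ)
    push_cast at hy
    rw [abs_of_nonneg (le_trans (mul_pos (by linarith) hpos).le hratio)]
    exact hle

end ThreeTerm

/- Writing `1 / ((n - k)! k!)` as `n.choose k / n!` makes the coefficient vanish for `k > n`,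
so `laguerreL α n` is the sum of its coefficients over any `range N` with `n < N`. -/
noncomputable def laguerreCoeff (α : ℝ) (n k : ℕ) : ℝ :=
  (-1) ^ k * (Gamma (n + α + 1) / Gamma (k + α + 1)) * (n.choose k / n.factorial)

lemma laguerreL_eq_sum_range_coeff (α : ℝ) {n N : ℕ} (hN : n < N) (x : ℝ) :
    laguerreL α n x = ∑ k ∈ range N, laguerreCoeff α n k * x ^ k := by
  rw [← sum_subset (range_subset_range.mpr hN) fun k _ hkn => by
    simp [laguerreCoeff, Nat.choose_eq_zero_of_lt (by simpa using hkn : n < k)]]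
  refine sum_congr rfl fun k hk => ?_
  have hkn : k ≤ n := Nat.lt_succ_iff.mp (mem_range.mp hk)
  rw [laguerreCoeff, Nat.cast_choose ℝ hkn]
  field_simp

lemma Gamma_natCast_add_add_one_pos {α : ℝ} (hα : -1 < α) (k : ℕ) : 0 < Gamma (k + α + 1) :=
  Gamma_pos_of_pos (by linarith [k.cast_nonneg (α := ℝ)])

lemma Gamma_natCast_succ_add_add_one {α : ℝ} (hα : -1 < α) (k : ℕ) :
    Gamma ((k + 1 : ℕ) + α + 1) = (k + α + 1) * Gamma (k + α + 1) := by
  rw [Nat.cast_succ, add_right_comm _ (1 : ℝ), Gamma_add_one (by linarith [k.cast_nonneg (α := ℝ)])]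

lemma choose_add_two_three_term (α : ℝ) (n k : ℕ) :
    (n + 2 + α) * ((n + 2).choose (k + 1) : ℝ) =
      (2 * n + 3 + α) * (n + 1).choose (k + 1) + (k + 1 + α) * (n + 1).choose k
        - (n + 1) * n.choose (k + 1) := by
  have pascal₂ : ((n + 2).choose (k + 1) : ℝ) = (n + 1).choose k + (n + 1).choose (k + 1) := by
    exact_mod_cast Nat.choose_succ_succ' (n + 1) k
  have pascal₁ : ((n + 1).choose (k + 1) : ℝ) = n.choose k + n.choose (k + 1) := by
    exact_mod_cast Nat.choose_succ_succ' n k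
  have absorb₁ : (n + 1 : ℝ) * n.choose k = (n + 1).choose (k + 1) * (k + 1) := by
    exact_mod_cast Nat.add_one_mul_choose_eq n k
  have absorb₂ : (n + 2 : ℝ) * (n + 1).choose k = (n + 2).choose (k + 1) * (k + 1) := by
    exact_mod_cast Nat.add_one_mul_choose_eq (n + 1) k
  linear_combination (n + k + 3 + α) * pascal₂ - (n + 1) * pascal₁ - absorb₁ + absorb₂

lemma laguerreCoeff_zero_recurrence {α : ℝ} (hα : -1 < α) (n : ℕ) :
    (n + 2) * laguerreCoeff α (n + 2) 0 =
      (2 * n + 3 + α) * laguerreCoeff α (n + 1) 0 - (n + 1 + α) * laguerreCoeff α n 0 := by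
  simp only [laguerreCoeff, Gamma_natCast_succ_add_add_one hα, Nat.factorial_succ,
    Nat.choose_zero_right]
  have := (Gamma_natCast_add_add_one_pos hα 0).ne'
  push_cast at *
  field_simp
  ring

lemma laguerreCoeff_succ_recurrence {α : ℝ} (hα : -1 < α) (n k : ℕ) :
    (n + 2) * laguerreCoeff α (n + 2) (k + 1) =
      (2 * n + 3 + α) * laguerreCoeff α (n + 1) (k + 1) - laguerreCoeff α (n + 1) k
        - (n + 1 + α) * laguerreCoeff α n (k + 1) := by
  simp only [laguerreCoeff, Gamma_natCast_succ_add_add_one hα, Nat.factorial_succ, pow_succ]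
  have := (Gamma_natCast_add_add_one_pos hα k).ne'
  have := (Gamma_natCast_add_add_one_pos hα n).ne'
  have : (k : ℝ) + α + 1 ≠ 0 := by linarith [k.cast_nonneg (α := ℝ)]
  push_cast
  field_simp
  linear_combination -(n + 2) * (n + α + 1) * choose_add_two_three_term α n k

theorem laguerreL_three_term_recurrence {α : ℝ} (hα : -1 < α) (n : ℕ) (x : ℝ) :
    (n + 2) * laguerreL α (n + 2) x =
      (2 * n + 3 + α - x) * laguerreL α (n + 1) x - (n + 1 + α) * laguerreL α n x := by
  have split (m : ℕ) (hm : m < n + 3) : laguerreL α m x =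
      ∑ k ∈ range (n + 2), laguerreCoeff α m (k + 1) * x ^ (k + 1) + laguerreCoeff α m 0 := by
    rw [laguerreL_eq_sum_range_coeff α hm, sum_range_succ', pow_zero, mul_one]
  have shift : x * laguerreL α (n + 1) x =
      ∑ k ∈ range (n + 2), laguerreCoeff α (n + 1) k * x ^ (k + 1) := by
    rw [laguerreL_eq_sum_range_coeff α (Nat.lt_succ_self _), mul_sum]
    exact sum_congr rfl fun k _ => by ring
  have higher : (n + 2) * ∑ k ∈ range (n + 2), laguerreCoeff α (n + 2) (k + 1) * x ^ (k + 1) =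
      (2 * n + 3 + α) * ∑ k ∈ range (n + 2), laguerreCoeff α (n + 1) (k + 1) * x ^ (k + 1)
        - ∑ k ∈ range (n + 2), laguerreCoeff α (n + 1) k * x ^ (k + 1)
        - (n + 1 + α) * ∑ k ∈ range (n + 2), laguerreCoeff α n (k + 1) * x ^ (k + 1) := by
    simp only [mul_sum, ← sum_sub_distrib]
    exact sum_congr rfl fun k _ => by
      linear_combination x ^ (k + 1) * laguerreCoeff_succ_recurrence hα n k
  rw [sub_mul, shift, split n (by omega), split (n + 1) (by omega), split (n + 2) (by omega)]
  linear_combination higher + laguerreCoeff_zero_recurrence hα n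

lemma laguerreL_zero {α : ℝ} (hα : -1 < α) (x : ℝ) : laguerreL α 0 x = 1 := by
  have hΓ₀ : Gamma (α + 1) ≠ 0 := (Gamma_pos_of_pos (by linarith)).ne'
  simp [laguerreL, hΓ₀]

lemma laguerreL_one {α : ℝ} (hα : -1 < α) (x : ℝ) : laguerreL α 1 x = α + 1 - x := by
  have hα₁ : α + 1 ≠ 0 := by linarith
  have hΓ₀ : Gamma (α + 1) ≠ 0 := (Gamma_pos_of_pos (by linarith)).ne'
  have hΓ₁ : Gamma (1 + α + 1) = (α + 1) * Gamma (α + 1) := by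
    rw [add_comm 1 α, Gamma_add_one hα₁]
  simp [laguerreL, sum_range_succ, hΓ₁]
  field_simp
  ring

noncomputable def monicLaguerre (α : ℝ) (n : ℕ) (x : ℝ) : ℝ :=
  (-1) ^ n * n.factorial * laguerreL α n x

lemma monicLaguerre_recurrence {α : ℝ} (hα : -1 < α) (n : ℕ) (x : ℝ) :
    monicLaguerre α (n + 2) x =
      (x - (2 * n + 3 + α)) * monicLaguerre α (n + 1) x
        - (n + 1) * (n + 1 + α) * monicLaguerre α n x := by
  simp only [monicLaguerre, Nat.factorial_succ, pow_succ]
  push_cast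
  linear_combination (-1) ^ n * (n + 1 : ℝ) * n.factorial * laguerreL_three_term_recurrence hα n x

theorem abs_laguerreL_le {α : ℝ} (hα : -1 < α) (n : ℕ) {y : ℝ} (hy : 4 * n + 2 * α + 2 ≤ y) :
    |laguerreL α n y| ≤ y ^ n / n.factorial := by
  have h := abs_le_pow_of_three_term (u := fun n => monicLaguerre α n y) hα
    (by simp [monicLaguerre, laguerreL_zero hα])
    (by simp [monicLaguerre, laguerreL_one hα]) (monicLaguerre_recurrence hα · y) n hy
  rw [le_div_iff₀ (by positivity), mul_comm]
  simpa [monicLaguerre, abs_mul] using h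

lemma psiLag_one (α : ℝ) (n : ℕ) (x : ℝ) :
    psiLag α 1 n x = √2 * x ^ (α + 1 / 2) * exp (-x ^ 2 / 2) *
      √(n.factorial / Gamma (n + α + 1)) * laguerreL α n (x ^ 2) := by
  simp [psiLag, laguerreLTilde, mul_assoc]

lemma sqrt_div_mul_eq_sqrt_mul_sqrt_div_div {a c : ℝ} (b : ℝ) (ha : 0 < a) (hc : 0 ≤ c) :
    √(c / (a * b)) = √c * √(a / b) / a := by
  rw [eq_div_iff ha.ne', ← sqrt_mul hc]
  nth_rw 2 [← sqrt_sq ha.le]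
  rw [← sqrt_mul' _ (sq_nonneg a)]
  congr 1
  field_simp

lemma rpow_two_mul_natCast_add {x : ℝ} (hx : 0 < x) (n : ℕ) (s : ℝ) :
    x ^ (2 * (n : ℝ) + s) = (x ^ 2) ^ n * x ^ s := by
  rw [rpow_add hx, ← pow_mul, ← rpow_natCast]
  norm_cast

theorem stmt5 (α : ℝ) (hα : -1/2 ≤ α) (Cα : ℝ)
    (hC : Cα = if (1/2 : ℝ) ≤ α then 2 * (α + 1) else 2 * (α + 1) + 1/16) :
    ∀ (n : ℕ) (x : ℝ), Real.sqrt (4 * n + Cα) ≤ x →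
      |psiLag α 1 n x| ≤ Real.sqrt (2 / (n.factorial * Real.Gamma (n + α + 1))) *
        x ^ (2 * (n : ℝ) + α + 1/2) * Real.exp (-x ^ 2 / 2) := by
  intro n x hx
  have hα' : -1 < α := by linarith
  have hCα : 2 * α + 2 ≤ Cα := by rw [hC]; split_ifs <;> linarith
  have hx₀ : 0 < x := (sqrt_pos.2 (by linarith [n.cast_nonneg (α := ℝ)])).trans_le hx
  have hy : 4 * n + 2 * α + 2 ≤ x ^ 2 := by linarith [(sqrt_le_iff.1 hx).2]
  calc |psiLag α 1 n x|
      = √2 * x ^ (α + 1 / 2) * exp (-x ^ 2 / 2) * √(n.factorial / Gamma (n + α + 1))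
          * |laguerreL α n (x ^ 2)| := by
        rw [psiLag_one, abs_mul, abs_of_nonneg (by positivity)]
    _ ≤ √2 * x ^ (α + 1 / 2) * exp (-x ^ 2 / 2) * √(n.factorial / Gamma (n + α + 1))
          * ((x ^ 2) ^ n / n.factorial) := by
        gcongr
        exact abs_laguerreL_le hα' n hy
    _ = _ := by
        rw [sqrt_div_mul_eq_sqrt_mul_sqrt_div_div _ (by positivity) zero_le_two, add_assoc (2 * (n : ℝ)),
          rpow_two_mul_natCast_add hx₀]
        ring
end

section
/- Let α ≥ −1/2, let C_α = 2(α+1) if α ≥ 1/2 and C_α = 2(α+1) + 1/16 if −1/2 ≤ α < 1/2, let a > 0, and let k ∈ ℕ satisfy k < min{(a² − 2α)/4, (a² − C_α)/4}. Then ∫_a^∞ |ψ_k^α(t)|² dt ≤ (2/(k! Γ(k+α+1))) · a^{4k+2α} · e^{−a²}. -/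
/-! For `x ≥ 4k + 2α + 2`, the three-term recurrence of the Laguerre polynomials keeps
`M_n = (-1)^n n! L_n^α(x)` in `[0, x^n]` for `n ≤ k`, since consecutive ratios stay above
`(x - 2n - 2 - α) / 2 > 0`. Hence `|ψ_k^α(t)|² ≤ 2/(k! Γ(k+α+1)) · t^(β+1) e^{-t²}`
on `t > a`, with `β = 4k + 2α ≤ a²`. There `t^(β+1) e^{-t²}` is dominated by the derivative
of `-t^β e^{-t²}`, whose tail integral is `a^β e^{-a²}`. -/

open Real MeasureTheory

namespace Laguerre

open Finset

variable {α : ℝ}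

lemma cast_choose_three_term (α : ℝ) (n j : ℕ) :
    ((n + 2).choose (j + 1) : ℝ) * (n + 2 + α) =
      (2 * n + 3 + α) * (n + 1).choose (j + 1) + (j + 1 + α) * (n + 1).choose j
        - (n + 1) * n.choose (j + 1) := by
  have pascal₁ : ((n + 2).choose (j + 1) : ℝ) = (n + 1).choose (j + 1) + (n + 1).choose j := by
    rw [Nat.choose_succ_succ (n + 1) j]; push_cast; ring
  have pascal₂ : ((n + 1).choose (j + 1) : ℝ) = n.choose (j + 1) + n.choose j := by
    rw [Nat.choose_succ_succ n j]; push_cast; ring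
  have absorb₁ : ((n + 1 : ℕ) : ℝ) * n.choose j = (n + 1).choose (j + 1) * (j + 1 : ℕ) := by
    exact_mod_cast Nat.add_one_mul_choose_eq n j
  have absorb₂ :
      ((n + 2 : ℕ) : ℝ) * (n + 1).choose j = (n + 2).choose (j + 1) * (j + 1 : ℕ) := by
    exact_mod_cast Nat.add_one_mul_choose_eq (n + 1) j
  push_cast at absorb₁ absorb₂
  linear_combination (n + 3 + j + α) * pascal₁ - (n + 1) * pascal₂ - absorb₁ + absorb₂

/-- The coefficient of `(-x) ^ j` in `n! * L_n^α(x)`. -/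
noncomputable def coeff (α : ℝ) (n j : ℕ) : ℝ :=
  n.choose j * (Gamma (n + α + 1) / Gamma (j + α + 1))

lemma factorial_mul_laguerreL_eq_sum (α x : ℝ) {n N : ℕ} (hN : n < N) :
    n.factorial * laguerreL α n x = ∑ j ∈ range N, (-1) ^ j * coeff α n j * x ^ j := by
  rw [← sum_subset (range_subset_range.2 hN) fun j _ hj => by
    simp [coeff, Nat.choose_eq_zero_of_lt (by simpa using hj : n < j)]]
  rw [laguerreL, mul_sum]
  refine sum_congr rfl fun j hj => ?_
  have hfac : (n.choose j : ℝ) * j.factorial * (n - j).factorial = n.factorial := by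
    exact_mod_cast Nat.choose_mul_factorial_mul_factorial (Nat.lt_succ_iff.mp (mem_range.mp hj))
  rw [coeff, ← hfac]
  field_simp

lemma Gamma_natCast_add_pos (hα : -1 < α) (n : ℕ) : 0 < Gamma (n + α + 1) :=
  Real.Gamma_pos_of_pos (by linarith [(n.cast_nonneg : (0 : ℝ) ≤ n)])

lemma Gamma_natCast_succ_add (hα : -1 < α) (n : ℕ) :
    Gamma ((n + 1 : ℕ) + α + 1) = (n + α + 1) * Gamma (n + α + 1) := by
  rw [← Real.Gamma_add_one (by linarith [(n.cast_nonneg : (0 : ℝ) ≤ n)])]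
  push_cast; ring_nf

lemma coeff_add_two_succ (hα : -1 < α) (n j : ℕ) :
    coeff α (n + 2) (j + 1) = (2 * n + 3 + α) * coeff α (n + 1) (j + 1) + coeff α (n + 1) j
      - (n + 1) * (n + 1 + α) * coeff α n (j + 1) := by
  have hj : (j : ℝ) + α + 1 ≠ 0 := by linarith [(j.cast_nonneg : (0 : ℝ) ≤ j)]
  have hG := (Gamma_natCast_add_pos hα j).ne'
  simp only [coeff, show n + 2 = n + 1 + 1 from rfl, Gamma_natCast_succ_add hα]
  have := cast_choose_three_term α n j
  push_cast at this ⊢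
  field_simp
  linear_combination (n + α + 1) * Gamma (n + α + 1) * this

lemma coeff_add_two_zero (hα : -1 < α) (n : ℕ) :
    coeff α (n + 2) 0 = (2 * n + 3 + α) * coeff α (n + 1) 0
      - (n + 1) * (n + 1 + α) * coeff α n 0 := by
  simp only [coeff, Nat.choose_zero_right, show n + 2 = n + 1 + 1 from rfl,
    Gamma_natCast_succ_add hα]
  push_cast
  ring

lemma factorial_mul_laguerreL_add_two (hα : -1 < α) (n : ℕ) (x : ℝ) :
    ((n + 2).factorial : ℝ) * laguerreL α (n + 2) x =
      (2 * n + 3 + α - x) * ((n + 1).factorial * laguerreL α (n + 1) x)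
        - (n + 1) * (n + 1 + α) * (n.factorial * laguerreL α n x) := by
  have e₂ := factorial_mul_laguerreL_eq_sum α x (n := n + 2) (N := n + 3) (by omega)
  have e₁ := factorial_mul_laguerreL_eq_sum α x (n := n + 1) (N := n + 3) (by omega)
  have e₀ := factorial_mul_laguerreL_eq_sum α x (n := n) (N := n + 3) (by omega)
  have e₁' := factorial_mul_laguerreL_eq_sum α x (n := n + 1) (N := n + 2) (by omega)
  simp only [sum_range_succ' _ (n + 2), pow_zero, one_mul, mul_one] at e₂ e₁ e₀
  have shift : x * ∑ j ∈ range (n + 2), (-1) ^ j * coeff α (n + 1) j * x ^ j =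
      ∑ j ∈ range (n + 2), (-1) ^ j * coeff α (n + 1) j * x ^ (j + 1) := by
    rw [mul_sum]; exact sum_congr rfl fun j _ => by ring
  have coeffs : ∑ j ∈ range (n + 2), (-1) ^ (j + 1) * coeff α (n + 2) (j + 1) * x ^ (j + 1) =
      (2 * n + 3 + α) *
          ∑ j ∈ range (n + 2), (-1) ^ (j + 1) * coeff α (n + 1) (j + 1) * x ^ (j + 1)
        - ∑ j ∈ range (n + 2), (-1) ^ j * coeff α (n + 1) j * x ^ (j + 1)
        - (n + 1) * (n + 1 + α) *
          ∑ j ∈ range (n + 2), (-1) ^ (j + 1) * coeff α n (j + 1) * x ^ (j + 1) := by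
    simp only [mul_sum, ← sum_sub_distrib]
    exact sum_congr rfl fun j _ => by rw [coeff_add_two_succ hα]; ring
  linear_combination e₂ - (2 * n + 3 + α) * e₁ + (n + 1) * (n + 1 + α) * e₀ + x * e₁'
    + coeffs + coeff_add_two_zero hα n + shift

/-- The lower ratio bound `r_m M_m ≤ M_{m+1}`, `r_m = (x - 2m - 2 - α) / 2`, propagates because
`(m + 1)(m + 1 + α) ≤ r_m²` and `x - (2m + 3 + α) - r_m = r_{m+1}`. -/
lemma recurrence_bounds (hα : -1 ≤ α) {x : ℝ} {M : ℕ → ℝ} (h₀ : M 0 = 1)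
    (h₁ : M 1 = x - 1 - α) (hrec : ∀ m : ℕ,
      M (m + 2) = (x - (2 * m + 3 + α)) * M (m + 1) - (m + 1) * (m + 1 + α) * M m)
    (m : ℕ) (hx : 4 * m + 2 * α + 2 ≤ x) :
    0 ≤ M m ∧ M m ≤ x ^ m ∧ (x - 2 * m - 2 - α) / 2 * M m ≤ M (m + 1) ∧
      M (m + 1) ≤ x * M m := by
  induction m with
  | zero => simp only [h₀, h₁]; norm_num; constructor <;> linarith
  | succ m ih =>
    push_cast at hx
    obtain ⟨hM, hMx, hlow, hup⟩ := ih (by linarith)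
    have hm : (0 : ℝ) ≤ m := m.cast_nonneg
    set r := (x - 2 * m - 2 - α) / 2 with hr_def
    have hr : (2 * m + 2 + α) / 2 ≤ r := by linarith
    have hc : 0 ≤ (m + 1) * (m + 1 + α) := by nlinarith
    have hcr : (m + 1) * (m + 1 + α) ≤ r ^ 2 := by nlinarith [sq_nonneg (α / 2)]
    have hM₁ : 0 ≤ M (m + 1) := le_trans (by nlinarith) hlow
    have hcM : (m + 1) * (m + 1 + α) * M m ≤ r * M (m + 1) := by
      nlinarith [mul_le_mul_of_nonneg_right hcr hM,
        mul_le_mul_of_nonneg_left hlow (by linarith : 0 ≤ r)]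
    push_cast
    refine ⟨hM₁, ?_, ?_, ?_⟩
    · rw [pow_succ']; nlinarith
    · rw [hrec]; nlinarith
    · rw [hrec]; nlinarith [mul_nonneg hc hM]

lemma abs_factorial_mul_laguerreL_le (hα : -1 < α) {n : ℕ} {x : ℝ}
    (hx : 4 * n + 2 * α + 2 ≤ x) : |n.factorial * laguerreL α n x| ≤ x ^ n := by
  set M : ℕ → ℝ := fun m => (-1) ^ m * (m.factorial * laguerreL α m x)
  have hG : Gamma (α + 1) ≠ 0 := (Real.Gamma_pos_of_pos (by linarith)).ne'
  have h₀ : M 0 = 1 := by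
    simp only [M]
    rw [factorial_mul_laguerreL_eq_sum α x one_pos]
    simp [coeff, hG]
  have h₁ : M 1 = x - 1 - α := by
    simp only [M]
    rw [factorial_mul_laguerreL_eq_sum α x (N := 1 + 1) one_lt_two]
    have h := Gamma_natCast_succ_add hα 0
    norm_num [sum_range_succ, coeff] at h ⊢
    have hα₁ : α + 1 ≠ 0 := by linarith
    rw [h]
    field_simp
    ring
  have hrec : ∀ m : ℕ,
      M (m + 2) = (x - (2 * m + 3 + α)) * M (m + 1) - (m + 1) * (m + 1 + α) * M m := by
    intro m
    simp only [M, factorial_mul_laguerreL_add_two hα]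
    ring
  obtain ⟨hM, hMx, -⟩ := recurrence_bounds hα.le h₀ h₁ hrec n hx
  calc |n.factorial * laguerreL α n x| = |M n| := by simp [M, abs_mul]
    _ = M n := abs_of_nonneg hM
    _ ≤ x ^ n := hMx

end Laguerre

section GaussianTail

open Set Filter Topology

lemma hasDerivAt_neg_rpow_mul_exp_neg_sq (β : ℝ) {t : ℝ} (ht : 0 < t) :
    HasDerivAt (fun s => -(s ^ β * exp (-s ^ 2)))
      ((2 * t ^ (β + 1) - β * t ^ (β - 1)) * exp (-t ^ 2)) t := by
  have hpow := Real.hasDerivAt_rpow_const (p := β) (Or.inl ht.ne')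
  have hexp : HasDerivAt (fun s => exp (-s ^ 2)) (exp (-t ^ 2) * -(2 * t)) t := by
    simpa using ((hasDerivAt_pow 2 t).neg).exp
  have key : -(β * t ^ (β - 1) * exp (-t ^ 2) + t ^ β * (exp (-t ^ 2) * -(2 * t))) =
      (2 * t ^ (β + 1) - β * t ^ (β - 1)) * exp (-t ^ 2) := by
    rw [Real.rpow_add_one ht.ne']; ring
  exact key ▸ (hpow.mul hexp).neg

lemma tendsto_rpow_mul_exp_neg_sq_atTop (β : ℝ) :
    Tendsto (fun t => t ^ β * exp (-t ^ 2)) atTop (𝓝 0) := by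
  simpa using (rpow_mul_exp_neg_mul_sq_isLittleO_exp_neg one_pos β).tendsto_zero_of_tendsto
    (tendsto_exp_atBot.comp (tendsto_id.const_mul_atTop_of_neg (by norm_num)))

lemma mul_rpow_sub_one_le_rpow_add_one {β t : ℝ} (ht : 0 < t) (hβ : β ≤ t ^ 2) :
    β * t ^ (β - 1) ≤ t ^ (β + 1) := by
  have hsplit : t ^ (β + 1) = t ^ (β - 1) * t ^ 2 := by
    rw [← Real.rpow_natCast t 2, ← Real.rpow_add ht]; norm_num; ring_nf
  rw [hsplit, mul_comm β]
  exact mul_le_mul_of_nonneg_left hβ (Real.rpow_nonneg ht.le _)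

theorem integral_Ioi_le_of_le_rpow_mul_exp_neg_sq {f : ℝ → ℝ} {a β C : ℝ} (ha : 0 < a)
    (hβ : β ≤ a ^ 2) (hC : 0 ≤ C) (hf₀ : ∀ t ∈ Ioi a, 0 ≤ f t)
    (hf : ∀ t ∈ Ioi a, f t ≤ C * (t ^ (β + 1) * exp (-t ^ 2))) :
    ∫ t in Ioi a, f t ≤ C * (a ^ β * exp (-a ^ 2)) := by
  set g : ℝ → ℝ := fun t => (2 * t ^ (β + 1) - β * t ^ (β - 1)) * exp (-t ^ 2)
  have hderiv : ∀ t ∈ Ici a, HasDerivAt (fun s => -(s ^ β * exp (-s ^ 2))) (g t) t :=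
    fun t ht => hasDerivAt_neg_rpow_mul_exp_neg_sq β (ha.trans_le ht)
  have hdom : ∀ t ∈ Ioi a, t ^ (β + 1) * exp (-t ^ 2) ≤ g t := fun t ht => by
    have ht₀ : 0 < t := ha.trans ht
    have := mul_rpow_sub_one_le_rpow_add_one ht₀ (hβ.trans (by nlinarith [mem_Ioi.mp ht]))
    exact mul_le_mul_of_nonneg_right (by linarith) (exp_pos _).le
  have hg₀ : ∀ t ∈ Ioi a, 0 ≤ g t := fun t ht =>
    (mul_nonneg (Real.rpow_nonneg (ha.trans ht).le _) (exp_pos _).le).trans (hdom t ht)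
  have hlim := (tendsto_rpow_mul_exp_neg_sq_atTop β).neg
  rw [neg_zero] at hlim
  have hg_int : IntegrableOn g (Ioi a) := integrableOn_Ioi_deriv_of_nonneg' hderiv hg₀ hlim
  have hg_eq : ∫ t in Ioi a, g t = a ^ β * exp (-a ^ 2) := by
    rw [integral_Ioi_of_hasDerivAt_of_nonneg' hderiv hg₀ hlim]; ring
  calc ∫ t in Ioi a, f t ≤ ∫ t in Ioi a, C * g t := by
        refine integral_mono_of_nonneg ?_ (hg_int.const_mul C) ?_ <;>
          filter_upwards [ae_restrict_mem measurableSet_Ioi] with t ht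
        · exact hf₀ t ht
        · exact (hf t ht).trans (mul_le_mul_of_nonneg_left (hdom t ht) hC)
    _ = C * (a ^ β * exp (-a ^ 2)) := by rw [integral_const_mul, hg_eq]

end GaussianTail

lemma sq_psiLag_one {α t : ℝ} (hα : -1 < α) (k : ℕ) (ht : 0 < t) :
    psiLag α 1 k t ^ 2 = 2 / (k.factorial * Gamma (k + α + 1)) *
      (k.factorial * laguerreL α k (t ^ 2)) ^ 2 * t ^ (2 * α + 1) * exp (-t ^ 2) := by
  have hΓ := Laguerre.Gamma_natCast_add_pos hα k
  have hfac : (0 : ℝ) < k.factorial := by positivity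
  have hrpow : (t ^ (α + 1 / 2)) ^ 2 = t ^ (2 * α + 1) := by
    rw [← Real.rpow_natCast, ← Real.rpow_mul ht.le]; norm_num; ring_nf
  have hexp : exp (-t ^ 2 / 2) ^ 2 = exp (-t ^ 2) := by rw [← Real.exp_nat_mul]; ring_nf
  simp only [psiLag, laguerreLTilde, one_pow, one_mul, Real.one_rpow, mul_one, mul_pow,
    Real.sq_sqrt zero_le_two, Real.sq_sqrt (div_nonneg hfac.le hΓ.le), hrpow, hexp]
  field_simp

lemma sq_abs_psiLag_one_le {α t : ℝ} (hα : -1 < α) (k : ℕ) (ht : 0 < t)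
    (hkt : 4 * k + 2 * α + 2 ≤ t ^ 2) :
    |psiLag α 1 k t| ^ 2 ≤ 2 / (k.factorial * Gamma (k + α + 1)) *
      (t ^ ((4 * k + 2 * α) + 1) * exp (-t ^ 2)) := by
  have hΓ := Laguerre.Gamma_natCast_add_pos hα k
  have hL : (k.factorial * laguerreL α k (t ^ 2)) ^ 2 ≤ t ^ (4 * k) := by
    rw [← sq_abs, show 4 * k = 2 * k * 2 by ring, pow_mul]
    exact pow_le_pow_left₀ (abs_nonneg _)
      ((Laguerre.abs_factorial_mul_laguerreL_le hα hkt).trans_eq (pow_mul t 2 k).symm) 2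
  have hpow : t ^ (4 * k) * t ^ (2 * α + 1) = t ^ ((4 * k + 2 * α) + 1) := by
    rw [← Real.rpow_natCast, ← Real.rpow_add ht]; push_cast; ring_nf
  have hweight : 0 ≤ t ^ (2 * α + 1) * exp (-t ^ 2) :=
    mul_nonneg (Real.rpow_nonneg ht.le _) (exp_pos _).le
  rw [sq_abs, sq_psiLag_one hα k ht, ← hpow, mul_assoc _ _ (exp _), mul_assoc _ (t ^ _),
    mul_assoc _ (_ ^ 2)]
  exact mul_le_mul_of_nonneg_left (mul_le_mul_of_nonneg_right hL hweight)
    (div_nonneg zero_le_two (by positivity))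

theorem stmt7 (α : ℝ) (hα : -1/2 ≤ α) (Cα : ℝ)
    (hC : Cα = if (1/2 : ℝ) ≤ α then 2 * (α + 1) else 2 * (α + 1) + 1/16)
    (a : ℝ) (ha : 0 < a) (k : ℕ)
    (hk : (k : ℝ) < min ((a ^ 2 - 2 * α) / 4) ((a ^ 2 - Cα) / 4)) :
    ∫ t in Set.Ioi a, |psiLag α 1 k t| ^ 2 ≤
      (2 / (k.factorial * Real.Gamma (k + α + 1))) * a ^ (4 * (k : ℝ) + 2 * α) *
        Real.exp (-a ^ 2) := by
  have hCα : 2 * α + 2 ≤ Cα := by rw [hC]; split_ifs <;> linarith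
  have hka : 4 * k + 2 * α + 2 < a ^ 2 := by linarith [lt_min_iff.mp hk]
  have hα₁ : -1 < α := by linarith
  have hΓ := Laguerre.Gamma_natCast_add_pos hα₁ k
  rw [mul_assoc]
  refine integral_Ioi_le_of_le_rpow_mul_exp_neg_sq ha (by linarith)
    (by positivity) (fun t _ => by positivity) fun t ht => ?_
  exact sq_abs_psiLag_one_le hα₁ k (ha.trans ht) (by nlinarith [Set.mem_Ioi.mp ht])
end
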